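/- Let Q_1, …, Q_J ∈ ℤ[x] be nonzero polynomials, let c_1, …, c_J be nonnegative real numbers, and let m ∈ ℝ be such that for every real x > 0 one has x − Σ_{j=1}^J c_j · log|Q_j(x)| ≥ m (with the convention that the inequality is required at all x > 0 where all Q_j(x) ≠ 0). If α is a totally positive algebraic integer of degree d with minimal polynomial P such that P divides none of the polynomials Q_j, then trace(α) ≥ m·d + Σ_{j=1}^J c_j · log|∏_{i=1}^d Q_j(α_i)|, where α_1, …, α_d are the conjugates of α; in particular (1/d)·trace(α) ≥ m. -/

import Mathlib

/-!
Evaluating the auxiliary inequality at each conjugate `α i` and summing over `i` gives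
`trace α ≥ m * d + ∑ j, c j * log |∏ i, Q j (α i)|`. The product `∏ i, Q j (α i)` is the
resultant `Res(P, Q j) ∈ ℤ`, which is nonzero since `P` stays irreducible over `ℚ` (Gauss's
lemma) and does not divide `Q j`. So every logarithm is nonnegative, whence `trace α / d ≥ m`.
-/

open Polynomial

theorem Polynomial.resultant_ne_zero_of_irreducible_of_not_dvd {R : Type*} [CommRing R]
    [IsDomain R] [IsIntegrallyClosed R] {P Q : R[X]} (hP : P.Monic) (hirr : Irreducible P)
    (hPQ : ¬P ∣ Q) : resultant P Q ≠ 0 := by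
  set φ := algebraMap R (FractionRing R)
  have hφ : Function.Injective φ := IsFractionRing.injective R (FractionRing R)
  have hcop : IsCoprime (P.map φ) (Q.map φ) :=
    (hP.irreducible_iff_irreducible_map_fraction_map.1 hirr).coprime_iff_not_dvd.2
      (by rwa [map_dvd_map φ hφ hP])
  have h := resultant_ne_zero _ _ hcop
  rwa [natDegree_map_eq_of_injective hφ, natDegree_map_eq_of_injective hφ, resultant_map_map,
    map_ne_zero_iff φ hφ] at h

theorem Polynomial.prod_eval_eq_resultant {R K ι : Type*} [CommRing R] [Field K] [Fintype ι]
    (φ : R →+* K) {P : R[X]} (hP : P.Monic) {α : ι → K}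
    (hα : P.map φ = ∏ i, (X - C (α i))) (Q : R[X]) :
    ∏ i, (Q.map φ).eval (α i) = φ (resultant P Q) := by
  have hsplit : (P.map φ).Splits := hα ▸ Splits.prod fun i _ => Splits.X_sub_C (α i)
  have hroots : (P.map φ).roots = Finset.univ.val.map α := by
    rw [hα, ← roots_multiset_prod_X_sub_C (Finset.univ.val.map α), Multiset.map_map]
    rfl
  rw [← resultant_map_map, ← hP.natDegree_map φ,
    resultant_eq_prod_eval _ _ _ natDegree_map_le hsplit, (hP.map φ).leadingCoeff, one_pow,
    one_mul, hroots, Multiset.map_map]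
  rfl

theorem Real.mul_card_add_sum_mul_log_abs_prod_le_sum {ι κ : Type*} [Fintype ι] [Fintype κ]
    (x : ι → ℝ) (g : κ → ι → ℝ) (c : κ → ℝ) (m : ℝ) (hg : ∀ j i, g j i ≠ 0)
    (h : ∀ i, m ≤ x i - ∑ j, c j * Real.log |g j i|) :
    m * Fintype.card ι + ∑ j, c j * Real.log |∏ i, g j i| ≤ ∑ i, x i := by
  have hlog : ∀ j, Real.log |∏ i, g j i| = ∑ i, Real.log |g j i| := fun j => by
    rw [Finset.abs_prod, Real.log_prod fun i _ => abs_ne_zero.2 (hg j i)]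
  calc m * Fintype.card ι + ∑ j, c j * Real.log |∏ i, g j i|
      = ∑ i, (m + ∑ j, c j * Real.log |g j i|) := by
        simp_rw [hlog, Finset.mul_sum, Finset.sum_add_distrib,
          Finset.sum_comm (s := Finset.univ (α := κ))]
        simp [mul_comm]
    _ ≤ ∑ i, x i := Finset.sum_le_sum fun i _ => by linarith [h i]

theorem trace_ge_of_auxiliary_function_general
    (J : ℕ) (Q : Fin J → Polynomial ℤ) (c : Fin J → ℝ) (m : ℝ)
    (hc : ∀ j, 0 ≤ c j)
    (hf : ∀ x : ℝ, 0 < x →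
      (∀ j, Polynomial.eval x ((Q j).map (Int.castRingHom ℝ)) ≠ 0) →
      m ≤ x - ∑ j, c j * Real.log |Polynomial.eval x ((Q j).map (Int.castRingHom ℝ))|)
    (P : Polynomial ℤ) (hmonic : P.Monic) (hirr : Irreducible P)
    (d : ℕ) (hdeg : P.natDegree = d)
    (α : Fin d → ℝ) (hpos : ∀ i, 0 < α i)
    (hfact : P.map (Int.castRingHom ℝ) = ∏ i, (X - C (α i)))
    (hndvd : ∀ j, ¬ P ∣ Q j) :
    m * d + ∑ j, c j * Real.log |∏ i, Polynomial.eval (α i) ((Q j).map (Int.castRingHom ℝ))|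
        ≤ ∑ i, α i
      ∧ m ≤ (1 / (d : ℝ)) * ∑ i, α i := by
  have hres : ∀ j, ∏ i, ((Q j).map (Int.castRingHom ℝ)).eval (α i) = resultant P (Q j) :=
    fun j => prod_eval_eq_resultant _ hmonic hfact (Q j)
  have hres_ne : ∀ j, resultant P (Q j) ≠ 0 :=
    fun j => resultant_ne_zero_of_irreducible_of_not_dvd hmonic hirr (hndvd j)
  have heval_ne : ∀ j i, ((Q j).map (Int.castRingHom ℝ)).eval (α i) ≠ 0 := fun j i =>
    Finset.prod_ne_zero_iff.1 (by rw [hres j]; exact_mod_cast hres_ne j) i (Finset.mem_univ i)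
  have hlog_nonneg :
      ∀ j, 0 ≤ c j * Real.log |∏ i, ((Q j).map (Int.castRingHom ℝ)).eval (α i)| :=
    fun j => mul_nonneg (hc j) <| Real.log_nonneg <| by
      rw [hres j]; exact_mod_cast Int.one_le_abs (hres_ne j)
  have hd : (0 : ℝ) < d := by
    exact_mod_cast hdeg ▸ hmonic.natDegree_pos_of_not_isUnit hirr.not_isUnit
  have htrace := Real.mul_card_add_sum_mul_log_abs_prod_le_sum α _ c m heval_ne
    fun i => hf (α i) (hpos i) fun j => heval_ne j i
  rw [Fintype.card_fin] at htrace
  refine ⟨htrace, ?_⟩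
  rw [one_div, inv_mul_eq_div, le_div_iff₀ hd]
  linarith [Finset.sum_nonneg fun j (_ : j ∈ Finset.univ) => hlog_nonneg j]

/-- the auxiliary function principle for the trace. Let
`Q 1, …, Q J ∈ ℤ[x]` be nonzero polynomials, `c 1, …, c J ≥ 0` real numbers and `m ∈ ℝ`
be such that `x − ∑ j, c j · log |Q j (x)| ≥ m` for every real `x > 0` at which all
`Q j (x) ≠ 0`. If `α` is a totally positive algebraic integer of degree `d` with monic
irreducible minimal polynomial `P` (with real roots `α 1, …, α d`, all positive) such
that `P` divides none of the `Q j`, then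
`trace(α) = ∑ i, α i ≥ m·d + ∑ j, c j · log |∏ i, Q j (α i)|`, and in particular
`(1/d)·trace(α) ≥ m`. -/
theorem trace_ge_of_auxiliary_function
    (J : ℕ) (Q : Fin J → Polynomial ℤ) (c : Fin J → ℝ) (m : ℝ)
    (hQ : ∀ j, Q j ≠ 0) (hc : ∀ j, 0 ≤ c j)
    (hf : ∀ x : ℝ, 0 < x →
      (∀ j, Polynomial.eval x ((Q j).map (Int.castRingHom ℝ)) ≠ 0) →
      m ≤ x - ∑ j, c j * Real.log |Polynomial.eval x ((Q j).map (Int.castRingHom ℝ))|)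
    (P : Polynomial ℤ) (hmonic : P.Monic) (hirr : Irreducible P)
    (d : ℕ) (hdeg : P.natDegree = d)
    (α : Fin d → ℝ) (hpos : ∀ i, 0 < α i)
    (hfact : P.map (Int.castRingHom ℝ) = ∏ i, (X - C (α i)))
    (hndvd : ∀ j, ¬ P ∣ Q j) :
    m * d + ∑ j, c j * Real.log |∏ i, Polynomial.eval (α i) ((Q j).map (Int.castRingHom ℝ))|
        ≤ ∑ i, α i
      ∧ m ≤ (1 / (d : ℝ)) * ∑ i, α i :=
  trace_ge_of_auxiliary_function_general J Q c m hc hf P hmonic hirr d hdeg α hpos hfact hndvd
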